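/- Let u : ℝ² → ℝ be smooth with 1 + u/γ > 0 and satisfying u_tt = [(1+u/γ)^{γ-1}]_xx. Suppose y₁, y₂ : ℝ² → ℝ are smooth functions satisfying y₁ₓ = (γ/(γ-1)) u_t, y₁ₜ = (1+u/γ)^{γ-2} u_x, y₂ₓ = W(u) sinh y₁, y₂ₜ = S(u) cosh y₁, where W, S satisfy S = ((γ-1)/γ) W' and S' = (1+u/γ)^{γ-2} W. Then y₂ satisfies the linear wave equation y₂ₜₜ = ((γ-1)/γ)(1+u/γ)^{γ-2} y₂ₓₓ. -/

import Mathlib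

/-- ∂ₓ acting on functions of (x,t). -/
noncomputable def pdX (f : ℝ × ℝ → ℝ) : ℝ × ℝ → ℝ :=
  fun p => deriv (fun s => f (s, p.2)) p.1

/-- ∂ₜ acting on functions of (x,t). -/
noncomputable def pdT (f : ℝ × ℝ → ℝ) : ℝ × ℝ → ℝ :=
  fun p => deriv (fun s => f (p.1, s)) p.2

/-- given u smooth with 1 + u/γ > 0 solving u_tt = [(1+u/γ)^{γ-1}]_xx,
and smooth pseudopotential components y₁, y₂ with
y₁ₓ = (γ/(γ-1)) u_t, y₁ₜ = (1+u/γ)^{γ-2} u_x,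
y₂ₓ = W(u) sinh y₁, y₂ₜ = S(u) cosh y₁,
where S = ((γ-1)/γ) W' and S' = (1+u/γ)^{γ-2} W, then y₂ satisfies the linear wave
equation y₂ₜₜ = ((γ-1)/γ)(1+u/γ)^{γ-2} y₂ₓₓ. -/
theorem stmt_13 (γ : ℝ) (hγ0 : γ ≠ 0) (hγ1 : γ ≠ 1)
    (u y₁ y₂ : ℝ × ℝ → ℝ)
    (hu : ContDiff ℝ (⊤ : ℕ∞) u) (hy₁ : ContDiff ℝ (⊤ : ℕ∞) y₁) (hy₂ : ContDiff ℝ (⊤ : ℕ∞) y₂)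
    (hpos : ∀ p, 0 < 1 + u p / γ)
    (hpde : ∀ p, pdT (pdT u) p = pdX (pdX (fun q => (1 + u q / γ) ^ (γ - 1))) p)
    (W S : ℝ → ℝ)
    (hW1 : Differentiable ℝ W) (hS1 : Differentiable ℝ S)
    (hWS : ∀ r : ℝ, 0 < 1 + r / γ →
      S r = ((γ - 1) / γ) * deriv W r ∧ deriv S r = (1 + r / γ) ^ (γ - 2) * W r)
    (h1x : ∀ p, pdX y₁ p = (γ / (γ - 1)) * pdT u p)
    (h1t : ∀ p, pdT y₁ p = (1 + u p / γ) ^ (γ - 2) * pdX u p)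
    (h2x : ∀ p, pdX y₂ p = W (u p) * Real.sinh (y₁ p))
    (h2t : ∀ p, pdT y₂ p = S (u p) * Real.cosh (y₁ p)) :
    ∀ p, pdT (pdT y₂) p = ((γ - 1) / γ) * (1 + u p / γ) ^ (γ - 2) * pdX (pdX y₂) p := by
  intro p
  have hγ1' : γ - 1 ≠ 0 := sub_ne_zero.mpr hγ1
  -- differentiability of slices
  have hus : Differentiable ℝ (fun s => u (p.1, s)) :=
    (hu.differentiable (by simp)).comp ((differentiable_const p.1).prodMk differentiable_id)
  have huX : Differentiable ℝ (fun s => u (s, p.2)) :=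
    (hu.differentiable (by simp)).comp (differentiable_id.prodMk (differentiable_const p.2))
  have hy1s : Differentiable ℝ (fun s => y₁ (p.1, s)) :=
    (hy₁.differentiable (by simp)).comp ((differentiable_const p.1).prodMk differentiable_id)
  have hy1X : Differentiable ℝ (fun s => y₁ (s, p.2)) :=
    (hy₁.differentiable (by simp)).comp (differentiable_id.prodMk (differentiable_const p.2))
  -- HasDerivAt facts
  have hut : HasDerivAt (fun s => u (p.1, s)) (pdT u p) p.2 := (hus p.2).hasDerivAt
  have hux : HasDerivAt (fun s => u (s, p.2)) (pdX u p) p.1 := (huX p.1).hasDerivAt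
  have hy1t : HasDerivAt (fun s => y₁ (p.1, s)) (pdT y₁ p) p.2 := (hy1s p.2).hasDerivAt
  have hy1x : HasDerivAt (fun s => y₁ (s, p.2)) (pdX y₁ p) p.1 := (hy1X p.1).hasDerivAt
  have hSu : HasDerivAt (fun s => S (u (p.1, s))) (deriv S (u p) * pdT u p) p.2 :=
    ((hS1 (u p)).hasDerivAt).comp p.2 hut
  have hWu : HasDerivAt (fun s => W (u (s, p.2))) (deriv W (u p) * pdX u p) p.1 :=
    ((hW1 (u p)).hasDerivAt).comp p.1 hux
  have hcosh : HasDerivAt (fun s => Real.cosh (y₁ (p.1, s))) (Real.sinh (y₁ p) * pdT y₁ p) p.2 :=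
    by have := (Real.hasDerivAt_cosh (y₁ p)).comp p.2 hy1t; exact this
  have hsinh : HasDerivAt (fun s => Real.sinh (y₁ (s, p.2))) (Real.cosh (y₁ p) * pdX y₁ p) p.1 :=
    by have := (Real.hasDerivAt_sinh (y₁ p)).comp p.1 hy1x; exact this
  -- compute second derivatives
  have hT : pdT (pdT y₂) p
      = deriv S (u p) * pdT u p * Real.cosh (y₁ p)
        + S (u p) * (Real.sinh (y₁ p) * pdT y₁ p) := by
    have heq : (fun s => pdT y₂ (p.1, s))
        = fun s => S (u (p.1, s)) * Real.cosh (y₁ (p.1, s)) :=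
      funext fun s => h2t (p.1, s)
    show deriv (fun s => pdT y₂ (p.1, s)) p.2 = _
    rw [heq]
    exact (hSu.mul hcosh).deriv
  have hX : pdX (pdX y₂) p
      = deriv W (u p) * pdX u p * Real.sinh (y₁ p)
        + W (u p) * (Real.cosh (y₁ p) * pdX y₁ p) := by
    have heq : (fun s => pdX y₂ (s, p.2))
        = fun s => W (u (s, p.2)) * Real.sinh (y₁ (s, p.2)) :=
      funext fun s => h2x (s, p.2)
    show deriv (fun s => pdX y₂ (s, p.2)) p.1 = _
    rw [heq]
    exact (hWu.mul hsinh).deriv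
  obtain ⟨hSeq, hS'eq⟩ := hWS (u p) (hpos p)
  rw [hT, hX, hSeq, hS'eq, h1x p, h1t p]
  field_simp
  ring
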